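/- Let ε > 0 and let W_1, …, W_t (t ≥ 1) be row-stochastic N×N real matrices every entry of which is at least ε. Then δ(W_t W_{t−1} ⋯ W_1) ≤ (1 − N·ε)^t. -/
import Mathlib


/-- Row differences `δ(W)`: the maximum over columns `j` and row pairs
`i₁, i₂` of `|W i₁ j − W i₂ j|`. -/
noncomputable def rowDiff {N : ℕ} (W : Matrix (Fin N) (Fin N) ℝ) : ℝ :=
  ⨆ j : Fin N, ⨆ i₁ : Fin N, ⨆ i₂ : Fin N, |W i₁ j - W i₂ j|

/-- The backward product `W_t ⋯ W_1` (empty product is the identity). -/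
def matProd {N : ℕ} (W : ℕ → Matrix (Fin N) (Fin N) ℝ) : ℕ → Matrix (Fin N) (Fin N) ℝ
  | 0 => 1
  | t + 1 => W (t + 1) * matProd W t

lemma oneside (N : ℕ) (hN : 0 < N) (ε D : ℝ) (hD : 0 ≤ D)
    (a b x : Fin N → ℝ) (ha : ∀ j, ε ≤ a j) (hb : ∀ j, ε ≤ b j)
    (has : ∑ j, a j = 1) (hbs : ∑ j, b j = 1)
    (hx : ∀ j k, |x j - x k| ≤ D) :
    (∑ j, a j * x j) - ∑ j, b j * x j ≤ (1 - N * ε) * D := by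
  haveI : Nonempty (Fin N) := Fin.pos_iff_nonempty.mp hN
  set c : Fin N → ℝ := fun j => min (a j) (b j) with hc
  obtain ⟨jM, hjM⟩ := Finite.exists_max x
  obtain ⟨jm, hjm⟩ := Finite.exists_min x
  have hsum : (∑ j, a j * x j) - ∑ j, b j * x j
      = (∑ j, (a j - c j) * x j) - ∑ j, (b j - c j) * x j := by
    simp only [sub_mul, Finset.sum_sub_distrib]
    ring
  have h1 : ∑ j, (a j - c j) * x j ≤ (∑ j, (a j - c j)) * x jM := by
    rw [Finset.sum_mul]
    apply Finset.sum_le_sum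
    intro j _
    exact mul_le_mul_of_nonneg_left (hjM j) (by simp [hc, min_le_left])
  have h2 : (∑ j, (b j - c j)) * x jm ≤ ∑ j, (b j - c j) * x j := by
    rw [Finset.sum_mul]
    apply Finset.sum_le_sum
    intro j _
    exact mul_le_mul_of_nonneg_left (hjm j) (by simp [hc, min_le_right])
  have hac : ∑ j, (a j - c j) = 1 - ∑ j, c j := by
    rw [Finset.sum_sub_distrib, has]
  have hbc : ∑ j, (b j - c j) = 1 - ∑ j, c j := by
    rw [Finset.sum_sub_distrib, hbs]
  have hcge : (N : ℝ) * ε ≤ ∑ j, c j := by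
    have : ∀ j ∈ Finset.univ, ε ≤ c j := fun j _ => le_min (ha j) (hb j)
    calc (N : ℝ) * ε = ∑ _j : Fin N, ε := by
          simp [Finset.sum_const, Finset.card_univ, mul_comm]
      _ ≤ ∑ j, c j := Finset.sum_le_sum this
  have hcle : ∑ j, c j ≤ 1 := by
    rw [← has]
    exact Finset.sum_le_sum fun j _ => min_le_left _ _
  have hMm : x jM - x jm ≤ D := le_trans (le_abs_self _) (hx jM jm)
  have hnn : 0 ≤ 1 - ∑ j, c j := by linarith
  calc (∑ j, a j * x j) - ∑ j, b j * x j
      = (∑ j, (a j - c j) * x j) - ∑ j, (b j - c j) * x j := hsum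
    _ ≤ (∑ j, (a j - c j)) * x jM - (∑ j, (b j - c j)) * x jm := by linarith
    _ = (1 - ∑ j, c j) * (x jM - x jm) := by rw [hac, hbc]; ring
    _ ≤ (1 - ∑ j, c j) * D := mul_le_mul_of_nonneg_left hMm hnn
    _ ≤ (1 - N * ε) * D := mul_le_mul_of_nonneg_right (by linarith) hD

lemma contraction (N : ℕ) (hN : 0 < N) (ε D : ℝ) (hD : 0 ≤ D)
    (a b x : Fin N → ℝ) (ha : ∀ j, ε ≤ a j) (hb : ∀ j, ε ≤ b j)
    (has : ∑ j, a j = 1) (hbs : ∑ j, b j = 1)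
    (hx : ∀ j k, |x j - x k| ≤ D) :
    |(∑ j, a j * x j) - ∑ j, b j * x j| ≤ (1 - N * ε) * D := by
  rw [abs_sub_le_iff]
  exact ⟨oneside N hN ε D hD a b x ha hb has hbs hx,
         oneside N hN ε D hD b a x hb ha hbs has hx⟩

lemma step_lemma (N : ℕ) (hN : 0 < N) (ε D : ℝ) (hD : 0 ≤ D)
    (M A : Matrix (Fin N) (Fin N) ℝ)
    (hM : ∀ i j, ε ≤ M i j) (hMr : ∀ i, ∑ j, M i j = 1)
    (hA : ∀ j i₁ i₂, |A i₁ j - A i₂ j| ≤ D) :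
    rowDiff (M * A) ≤ (1 - N * ε) * D := by
  haveI : Nonempty (Fin N) := Fin.pos_iff_nonempty.mp hN
  apply ciSup_le; intro j
  apply ciSup_le; intro i₁
  apply ciSup_le; intro i₂
  have : (M * A) i₁ j = ∑ k, M i₁ k * A k j := Matrix.mul_apply
  rw [this]
  have : (M * A) i₂ j = ∑ k, M i₂ k * A k j := Matrix.mul_apply
  rw [this]
  exact contraction N hN ε D hD (M i₁) (M i₂) (fun k => A k j)
    (hM i₁) (hM i₂) (hMr i₁) (hMr i₂) (fun k l => hA j k l)

lemma rowDiff_bound {N : ℕ} (A : Matrix (Fin N) (Fin N) ℝ)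
    (j i₁ i₂ : Fin N) : |A i₁ j - A i₂ j| ≤ rowDiff A := by
  haveI : Nonempty (Fin N) := ⟨j⟩
  calc |A i₁ j - A i₂ j| ≤ ⨆ i₂' : Fin N, |A i₁ j - A i₂' j| :=
        le_ciSup (f := fun i₂' : Fin N => |A i₁ j - A i₂' j|)
          (Finite.bddAbove_range _) i₂
    _ ≤ ⨆ i₁' : Fin N, ⨆ i₂' : Fin N, |A i₁' j - A i₂' j| :=
        le_ciSup (f := fun i₁' : Fin N => ⨆ i₂' : Fin N, |A i₁' j - A i₂' j|)
          (Finite.bddAbove_range _) i₁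
    _ ≤ rowDiff A := by
        unfold rowDiff
        exact le_ciSup
          (f := fun j' : Fin N => ⨆ i₁' : Fin N, ⨆ i₂' : Fin N, |A i₁' j' - A i₂' j'|)
          (Finite.bddAbove_range _) j

lemma rowDiff_nonneg {N : ℕ} (hN : 0 < N) (A : Matrix (Fin N) (Fin N) ℝ) :
    0 ≤ rowDiff A := by
  haveI : Nonempty (Fin N) := Fin.pos_iff_nonempty.mp hN
  obtain ⟨i⟩ := ‹Nonempty (Fin N)›
  have := rowDiff_bound A i i i
  simpa using this

/-- if `W_1, …, W_t` are row-stochastic with all entries at least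
`ε > 0`, then `δ(W_t W_{t−1} ⋯ W_1) ≤ (1 − N·ε)^t`. -/
theorem rowDiff_prod_le_pow
    (N : ℕ) (ε : ℝ) (hε : 0 < ε) (t : ℕ) (ht : 1 ≤ t)
    (W : ℕ → Matrix (Fin N) (Fin N) ℝ)
    (hpos : ∀ s ∈ Finset.Icc 1 t, ∀ i j, ε ≤ W s i j)
    (hrow : ∀ s ∈ Finset.Icc 1 t, ∀ i, ∑ j, W s i j = 1) :
    rowDiff (matProd W t) ≤ (1 - N * ε) ^ t := by
  rcases Nat.eq_zero_or_pos N with hN | hN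
  · subst hN
    have h0 : rowDiff (matProd W t) = 0 := by
      unfold rowDiff
      exact Real.iSup_of_isEmpty _
    rw [h0]
    simp
  -- N ≥ 1
  haveI : Nonempty (Fin N) := Fin.pos_iff_nonempty.mp hN
  have hNe : (N : ℝ) * ε ≤ 1 := by
    obtain ⟨i⟩ := ‹Nonempty (Fin N)›
    have h1 : (1 : ℕ) ∈ Finset.Icc 1 t := Finset.mem_Icc.mpr ⟨le_refl _, ht⟩
    have := hrow 1 h1 i
    calc (N : ℝ) * ε = ∑ _j : Fin N, ε := by
          simp [Finset.sum_const, Finset.card_univ, mul_comm]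
      _ ≤ ∑ j, W 1 i j := Finset.sum_le_sum fun j _ => hpos 1 h1 i j
      _ = 1 := this
  have hnn : 0 ≤ 1 - (N : ℝ) * ε := by linarith
  have main : ∀ t, 1 ≤ t →
      (∀ s ∈ Finset.Icc 1 t, ∀ i j, ε ≤ W s i j) →
      (∀ s ∈ Finset.Icc 1 t, ∀ i, ∑ j, W s i j = 1) →
      rowDiff (matProd W t) ≤ (1 - N * ε) ^ t := by
    intro t ht
    induction t, ht using Nat.le_induction with
    | base =>
      intro hpos hrow
      have h1 : (1 : ℕ) ∈ Finset.Icc 1 1 := by simp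
      have : matProd W 1 = W 1 * matProd W 0 := rfl
      rw [this]
      have : matProd W (0 : ℕ) = (1 : Matrix (Fin N) (Fin N) ℝ) := rfl
      rw [this, pow_one]
      have := step_lemma N hN ε 1 zero_le_one (W 1) 1 (hpos 1 h1) (hrow 1 h1)
        (by
          intro j i₁ i₂
          rcases eq_or_ne i₁ j with h | h <;> rcases eq_or_ne i₂ j with h' | h' <;>
            simp [Matrix.one_apply, h, h'])
      simpa using this
    | succ n hn ih =>
      intro hpos hrow
      have hsub : ∀ s ∈ Finset.Icc 1 n, s ∈ Finset.Icc 1 (n + 1) := by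
        intro s hs
        rw [Finset.mem_Icc] at *
        omega
      have ihn := ih (fun s hs => hpos s (hsub s hs)) (fun s hs => hrow s (hsub s hs))
      have hmem : n + 1 ∈ Finset.Icc 1 (n + 1) := Finset.mem_Icc.mpr ⟨by omega, le_refl _⟩
      have : matProd W (n + 1) = W (n + 1) * matProd W n := rfl
      rw [this]
      have hstep := step_lemma N hN ε (rowDiff (matProd W n)) (rowDiff_nonneg hN _)
        (W (n + 1)) (matProd W n) (hpos _ hmem) (hrow _ hmem)
        (fun j i₁ i₂ => rowDiff_bound _ j i₁ i₂)
      calc rowDiff (W (n + 1) * matProd W n)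
          ≤ (1 - N * ε) * rowDiff (matProd W n) := hstep
        _ ≤ (1 - N * ε) * (1 - N * ε) ^ n := mul_le_mul_of_nonneg_left ihn hnn
        _ = (1 - N * ε) ^ (n + 1) := by ring
  exact main t ht hpos hrow
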